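/- Let A and B be finite sets, s, u : A → ℕ, v : B → ℕ, and k, M ∈ ℕ. Let P be the set of pairs (x, q) with x : A → [0,1] and q : B → [0,1] satisfying Σ_{a∈A}(x_a + s_a·(1 − x_a)) + Σ_{b∈B} q_b ≤ k and Σ_{a∈A}(1 − x_a)·u_a + Σ_{b∈B}(1 − q_b)·v_b ≤ M. If (x*, q*) is an extreme point of P, then there exists an integral point (x̃, q̃) ∈ P, with every coordinate in {0,1}, that agrees with (x*, q*) on every coordinate of (x*, q*) lying in {0,1}; in particular (x̃, q̃) differs from (x*, q*) in at most two coordinates. -/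

import Mathlib

/-!
At an extreme point no nonzero direction supported on the fractional coordinates can leave both
constraint values unchanged, so a dimension count leaves at most two fractional coordinates.
Rounding them up only helps the second constraint, whose weights are nonnegative. In the first
constraint a coordinate has the integral coefficient `1 - s a ≤ 1` (or `1`), so rounding it up
raises the left side by less than `1`; as the rounded left side is an integer, rounding everything
up can fail only when there are two fractional coordinates, both of coefficient `1`, with values
summing to at most `1`. Then the one of larger weight in the second constraint is rounded up and
the other one down.
-/

open Set Filter Topology Module

theorem eq_zero_of_mem_extremePoints_of_eventually_add_smul_mem {E : Type*} [AddCommGroup E]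
    [Module ℝ E] {S : Set E} {x δ : E} (hx : x ∈ extremePoints ℝ S)
    (h : ∀ᶠ t : ℝ in 𝓝 0, x + t • δ ∈ S) : δ = 0 := by
  obtain ⟨ε, hε, hball⟩ := Metric.eventually_nhds_iff.1 h
  have hmem : ∀ t : ℝ, |t| < ε → x + t • δ ∈ S := fun t ht => hball (by simpa using ht)
  have hpos := hmem (ε / 2) (by rw [abs_of_pos (by positivity)]; linarith)
  have hneg := hmem (-(ε / 2)) (by rw [abs_neg, abs_of_pos (by positivity)]; linarith)
  have hseg : x ∈ openSegment ℝ (x + (ε / 2) • δ) (x + (-(ε / 2)) • δ) :=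
    ⟨1 / 2, 1 / 2, by norm_num, by norm_num, by norm_num, by module⟩
  have hfix := ((mem_extremePoints.1 hx).2 _ hpos _ hneg hseg).1
  simpa [hε.ne'] using hfix

def fractionalCoords {ι : Type*} (y : ι → ℝ) : Set ι := {i | y i ≠ 0 ∧ y i ≠ 1}

section
variable {ι : Type*} {y : ι → ℝ} {i : ι}

theorem mem_Ioo_of_mem_fractionalCoords (hy : y i ∈ Icc 0 1) (hi : i ∈ fractionalCoords y) :
    y i ∈ Ioo 0 1 :=
  ⟨hy.1.lt_of_ne' hi.1, hy.2.lt_of_ne hi.2⟩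

theorem notMem_fractionalCoords : i ∉ fractionalCoords y ↔ y i = 0 ∨ y i = 1 :=
  not_and_or.trans (or_congr not_not not_not)

theorem eventually_add_smul_mem_Icc [Finite ι] {δ : ι → ℝ} (hy : ∀ i, y i ∈ Icc 0 1)
    (hδ : ∀ i ∉ fractionalCoords y, δ i = 0) :
    ∀ᶠ t : ℝ in 𝓝 0, ∀ i, (y + t • δ) i ∈ Icc 0 1 := by
  refine eventually_all.2 fun i => ?_
  by_cases hi : i ∈ fractionalCoords y
  · have hyi := mem_Ioo_of_mem_fractionalCoords (hy i) hi
    have hlim : Tendsto (fun t : ℝ => y i + t * δ i) (𝓝 0) (𝓝 (y i)) := by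
      have hcont : Continuous fun t : ℝ => y i + t * δ i := by fun_prop
      simpa using hcont.tendsto 0
    exact (hlim.eventually (Ioo_mem_nhds hyi.1 hyi.2)).mono fun t ht => Ioo_subset_Icc_self ht
  · simp [hδ i hi, hy i]

end

section
variable {ι : Type*} [Fintype ι]

theorem ncard_fractionalCoords_le_finrank {V : Type*} [AddCommGroup V] [Module ℝ V]
    [FiniteDimensional ℝ V] (L : (ι → ℝ) →ₗ[ℝ] V) {S : Set (ι → ℝ)}
    {y : ι → ℝ} (hy : y ∈ extremePoints ℝ S) (hbox : ∀ i, y i ∈ Icc 0 1)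
    (hS : ∀ y', (∀ i, y' i ∈ Icc 0 1) → L y' = L y → y' ∈ S) :
    (fractionalCoords y).ncard ≤ finrank ℝ V := by
  classical
  by_contra! hlt
  let restrict : (ι → ℝ) →ₗ[ℝ] (↥((fractionalCoords y)ᶜ) → ℝ) :=
    LinearMap.funLeft ℝ ℝ Subtype.val
  have hker : LinearMap.ker (L.prod restrict) ≠ ⊥ := by
    refine LinearMap.ker_ne_bot_of_finrank_lt ?_
    have := Set.ncard_add_ncard_compl (fractionalCoords y)
    simp only [finrank_prod, finrank_fintype_fun_eq_card, ← Nat.card_eq_fintype_card,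
      Nat.card_coe_set_eq]
    omega
  obtain ⟨δ, hδker, hδ⟩ := Submodule.exists_mem_ne_zero_of_ne_bot hker
  obtain ⟨hLδ, hδF⟩ : L δ = 0 ∧ restrict δ = 0 := Prod.mk_eq_zero.1 (LinearMap.mem_ker.1 hδker)
  refine hδ (eq_zero_of_mem_extremePoints_of_eventually_add_smul_mem hy ?_)
  filter_upwards [eventually_add_smul_mem_Icc hbox fun i hi => congrFun hδF ⟨i, hi⟩] with t ht
  exact hS _ ht (by simp [hLδ])

theorem sum_mul_le_or_add_one_le (c : ι → ℤ) {z : ι → ℝ} (hz : ∀ i, z i = 0 ∨ z i = 1) (K : ℤ) :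
    ∑ i, c i * z i ≤ K ∨ K + 1 ≤ ∑ i, c i * z i := by
  have hint : ∀ i, ∃ w : ℤ, z i = w := fun i =>
    (hz i).elim (fun h => ⟨0, by simp [h]⟩) fun h => ⟨1, by simp [h]⟩
  choose w hw using hint
  have hsum : ∑ i, c i * z i = ((∑ i, c i * w i : ℤ) : ℝ) := by push_cast [hw]; rfl
  rw [hsum]
  exact_mod_cast le_or_gt (∑ i, c i * w i) K

theorem exists_eq_pair_of_one_le_sum {F : Set ι} {g : ι → ℝ}
    (hF : F.ncard ≤ 2) (hg0 : ∀ i ∉ F, g i = 0) (hg1 : ∀ i, g i < 1) (hsum : 1 ≤ ∑ i, g i) :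
    ∃ j₀ j₁, j₀ ≠ j₁ ∧ F = {j₀, j₁} := by
  rcases hF.lt_or_eq with hlt | h2
  · have : Nonempty ι := by
      by_contra h
      rw [not_nonempty_iff] at h
      norm_num at hsum
    obtain ⟨j, hj⟩ := (ncard_le_one_iff_subset_singleton).1 (Nat.lt_succ_iff.1 hlt)
    rw [Fintype.sum_eq_single j fun i hi => hg0 i fun h => hi (hj h)] at hsum
    exact absurd hsum (hg1 j).not_ge
  · exact ncard_eq_two.1 h2

theorem exists_rounding_of_fractionalCoords_eq_pair (c : ι → ℤ) (d : ι → ℝ) (K : ℤ) {y : ι → ℝ}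
    (hy : ∀ i, y i ∈ Icc 0 1) {j₀ j₁ : ι}
    (hne : j₀ ≠ j₁) (hF : fractionalCoords y = {j₀, j₁}) (hc₀ : c j₀ = 1) (hc₁ : c j₁ = 1)
    (hy₀₁ : y j₀ + y j₁ ≤ 1) (hd₀ : 0 ≤ d j₀) (hd₁₀ : d j₁ ≤ d j₀)
    (hK : ∑ i, c i * y i ≤ K) :
    ∃ z : ι → ℝ, (∀ i, z i = 0 ∨ z i = 1) ∧ (∀ i ∉ fractionalCoords y, z i = y i) ∧
      ∑ i, c i * z i ≤ K ∧ ∑ i, d i * y i ≤ ∑ i, d i * z i := by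
  classical
  let z := Function.update (Function.update y j₀ 1) j₁ 0
  have hz₀ : z j₀ = 1 := by simp [z, hne]
  have hz₁ : z j₁ = 0 := by simp [z]
  have hoff : ∀ i ∉ fractionalCoords y, z i = y i := fun i hi => by
    have hi' : i ≠ j₀ ∧ i ≠ j₁ := by simpa [hF, not_or] using hi
    simp [z, hi'.1, hi'.2]
  have hdiff : ∀ w : ι → ℝ,
      ∑ i, w i * z i = ∑ i, w i * y i + (w j₀ * (1 - y j₀) - w j₁ * y j₁) := fun w => by
    rw [← sub_eq_iff_eq_add', ← Finset.sum_sub_distrib, Fintype.sum_eq_add j₀ j₁ hne]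
    · simp only [← mul_sub, hz₀, hz₁]; ring
    · intro i hi
      rw [hoff i (by simpa [hF, not_or] using hi), sub_self]
  have hy₀ := (mem_Ioo_of_mem_fractionalCoords (hy j₀) (hF ▸ mem_insert j₀ _)).1
  have hz01 : ∀ i, z i = 0 ∨ z i = 1 := fun i => by
    by_cases hi : i ∈ fractionalCoords y
    · rcases hF ▸ hi with rfl | rfl
      · exact Or.inr hz₀
      · exact Or.inl hz₁
    · rw [hoff i hi]; exact notMem_fractionalCoords.1 hi
  refine ⟨z, hz01, hoff, ?_, ?_⟩
  · refine (sum_mul_le_or_add_one_le c hz01 K).resolve_right fun h => ?_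
    rw [hdiff, hc₀, hc₁] at h
    push_cast at h
    linarith [(hy j₁).1]
  · rw [hdiff]
    nlinarith [(hy j₁).1]

theorem exists_rounding_of_ncard_fractionalCoords_le_two (c : ι → ℤ) (hc : ∀ i, c i ≤ 1) (d : ι → ℝ)
    (hd : ∀ i, 0 ≤ d i) (K : ℤ) {y : ι → ℝ} (hy : ∀ i, y i ∈ Icc 0 1)
    (hF : (fractionalCoords y).ncard ≤ 2) (hK : ∑ i, c i * y i ≤ K) :
    ∃ z : ι → ℝ, (∀ i, z i = 0 ∨ z i = 1) ∧ (∀ i ∉ fractionalCoords y, z i = y i) ∧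
      ∑ i, c i * z i ≤ K ∧ ∑ i, d i * y i ≤ ∑ i, d i * z i := by
  classical
  set F := fractionalCoords y
  let up : ι → ℝ := fun i => if i ∈ F then 1 else y i
  have hup_off : ∀ i ∉ F, up i = y i := fun i hi => if_neg hi
  have hup01 : ∀ i, up i = 0 ∨ up i = 1 := fun i => by
    by_cases hi : i ∈ F
    · simp [up, hi]
    · rw [hup_off i hi]; exact notMem_fractionalCoords.1 hi
  rcases sum_mul_le_or_add_one_le c hup01 K with hup | hup
  · refine ⟨up, hup01, hup_off, hup, Finset.sum_le_sum fun i _ => ?_⟩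
    by_cases hi : i ∈ F
    · simpa [up, hi] using mul_le_mul_of_nonneg_left (hy i).2 (hd i)
    · rw [hup_off i hi]
  -- `g i` is what rounding `y i` up adds to the left side.
  let g : ι → ℝ := fun i => c i * (up i - y i)
  have hg0 : ∀ i ∉ F, g i = 0 := fun i hi => by simp [g, hup_off i hi]
  have hg1 : ∀ i, g i < 1 := fun i => by
    by_cases hi : i ∈ F
    · have hyi := mem_Ioo_of_mem_fractionalCoords (hy i) hi
      have hci : (c i : ℝ) ≤ 1 := by exact_mod_cast hc i
      simp only [g, up, if_pos hi]
      nlinarith [hyi.1, hyi.2]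
    · simp [hg0 i hi]
  have hgsum : 1 ≤ ∑ i, g i := by
    simp only [g, mul_sub, Finset.sum_sub_distrib]
    linarith
  obtain ⟨j₀, j₁, hne, hFeq⟩ := exists_eq_pair_of_one_le_sum hF hg0 hg1 hgsum
  have hc_eq_one : ∀ j ∈ F, 0 < g j → c j = 1 := fun j hj hgj => by
    have hyj := mem_Ioo_of_mem_fractionalCoords (hy j) hj
    have hcj : (0 : ℝ) < c j :=
      pos_of_mul_pos_left (by simpa [g, up, hj] using hgj) (by linarith [hyj.2])
    have := hc j
    have : 0 < c j := by exact_mod_cast hcj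
    omega
  have hj₀ : j₀ ∈ F := hFeq ▸ mem_insert j₀ _
  have hj₁ : j₁ ∈ F := hFeq ▸ mem_insert_of_mem _ rfl
  have hpair : ∑ i, g i = g j₀ + g j₁ :=
    Fintype.sum_eq_add j₀ j₁ hne fun i hi => hg0 i (by simp [hFeq, hi.1, hi.2])
  rw [hpair] at hgsum
  have hc₀ := hc_eq_one j₀ hj₀ (by linarith [hg1 j₁])
  have hc₁ := hc_eq_one j₁ hj₁ (by linarith [hg1 j₀])
  have hy₀₁ : y j₀ + y j₁ ≤ 1 := by
    simp only [g, up, if_pos hj₀, if_pos hj₁, hc₀, hc₁] at hgsum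
    push_cast at hgsum
    linarith
  rcases le_total (d j₁) (d j₀) with hd₁₀ | hd₀₁
  · exact exists_rounding_of_fractionalCoords_eq_pair c d K hy hne hFeq hc₀ hc₁ hy₀₁ (hd j₀) hd₁₀ hK
  · exact exists_rounding_of_fractionalCoords_eq_pair c d K hy hne.symm (hFeq.trans (pair_comm _ _))
      hc₁ hc₀ (by linarith) (hd j₁) hd₀₁ hK

def coveringKnapsackPolytope (s w : ι → ℕ) (k M : ℕ) : Set (ι → ℝ) :=
  {y | (∀ i, y i ∈ Icc 0 1) ∧ ∑ i, (y i + (s i : ℝ) * (1 - y i)) ≤ k ∧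
    ∑ i, (1 - y i) * (w i : ℝ) ≤ M}

variable {s w : ι → ℕ} {k M : ℕ} {y : ι → ℝ}

theorem mem_coveringKnapsackPolytope_iff :
    y ∈ coveringKnapsackPolytope s w k M ↔ (∀ i, y i ∈ Icc 0 1) ∧
      ∑ i, (s i : ℝ) + ∑ i, (1 - (s i : ℝ)) * y i ≤ k ∧
      ∑ i, (w i : ℝ) - ∑ i, (w i : ℝ) * y i ≤ M := by
  have h₁ : ∑ i, (y i + (s i : ℝ) * (1 - y i)) = ∑ i, (s i : ℝ) + ∑ i, (1 - (s i : ℝ)) * y i := by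
    rw [← Finset.sum_add_distrib]
    exact Finset.sum_congr rfl fun i _ => by ring
  have h₂ : ∑ i, (1 - y i) * (w i : ℝ) = ∑ i, (w i : ℝ) - ∑ i, (w i : ℝ) * y i := by
    rw [← Finset.sum_sub_distrib]
    exact Finset.sum_congr rfl fun i _ => by ring
  rw [← h₁, ← h₂]
  rfl

theorem ncard_fractionalCoords_le_two
    (hy : y ∈ extremePoints ℝ (coveringKnapsackPolytope s w k M)) :
    (fractionalCoords y).ncard ≤ 2 := by
  let L := Matrix.mulVecLin (Matrix.of ![fun i => 1 - (s i : ℝ), fun i => (w i : ℝ)])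
  have hbound := ncard_fractionalCoords_le_finrank L hy
    (mem_coveringKnapsackPolytope_iff.1 hy.1).1 fun y' hbox hL => ?_
  · simpa using hbound
  have h₁ := congrFun hL 0
  have h₂ := congrFun hL 1
  simp only [L, Matrix.mulVecLin_apply, Matrix.mulVec, dotProduct, Matrix.of_apply,
    Matrix.cons_val', Matrix.cons_val_fin_one, Matrix.cons_val_zero, Matrix.cons_val_one] at h₁ h₂
  obtain ⟨-, hk, hM⟩ := mem_coveringKnapsackPolytope_iff.1 hy.1
  exact mem_coveringKnapsackPolytope_iff.2 ⟨hbox, h₁ ▸ hk, h₂ ▸ hM⟩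

theorem exists_integral_mem_coveringKnapsackPolytope (hy : y ∈ coveringKnapsackPolytope s w k M)
    (hF : (fractionalCoords y).ncard ≤ 2) :
    ∃ z ∈ coveringKnapsackPolytope s w k M, (∀ i, z i = 0 ∨ z i = 1) ∧
      ∀ i ∉ fractionalCoords y, z i = y i := by
  obtain ⟨hbox, hk, hM⟩ := mem_coveringKnapsackPolytope_iff.1 hy
  obtain ⟨z, hz01, hzy, hzk, hzM⟩ := exists_rounding_of_ncard_fractionalCoords_le_two
    (fun i => 1 - (s i : ℤ)) (by simp) (fun i => (w i : ℝ)) (by simp) (k - ∑ i, (s i : ℤ))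
    hbox hF (by push_cast; linarith)
  have hzbox : ∀ i, z i ∈ Icc 0 1 := fun i => by rcases hz01 i with h | h <;> simp [h]
  push_cast at hzk
  exact ⟨z, mem_coveringKnapsackPolytope_iff.2 ⟨hzbox, by linarith, by linarith⟩, hz01, hzy⟩

end

theorem ncard_setOf_inl_add_ncard_setOf_inr {A B : Type*} [Finite A] [Finite B]
    (p : A ⊕ B → Prop) :
    {a | p (.inl a)}.ncard + {b | p (.inr b)}.ncard = {i | p i}.ncard := by
  simp only [← Nat.card_coe_set_eq]
  exact Nat.card_sum.symm.trans (Nat.card_congr Equiv.subtypeSum.symm)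

theorem stmt_8 {A B : Type*} [Fintype A] [Fintype B]
    (s u : A → ℕ) (v : B → ℕ) (k M : ℕ)
    (P : Set ((A → ℝ) × (B → ℝ)))
    (hP : P = {xq | (∀ a, 0 ≤ xq.1 a ∧ xq.1 a ≤ 1) ∧
      (∀ b, 0 ≤ xq.2 b ∧ xq.2 b ≤ 1) ∧
      (∑ a, (xq.1 a + (s a : ℝ) * (1 - xq.1 a))) + (∑ b, xq.2 b) ≤ (k : ℝ) ∧
      (∑ a, (1 - xq.1 a) * (u a : ℝ)) + (∑ b, (1 - xq.2 b) * (v b : ℝ)) ≤ (M : ℝ)})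
    (xq : (A → ℝ) × (B → ℝ)) (hxq : xq ∈ Set.extremePoints ℝ P) :
    ∃ (xt : A → ℝ) (qt : B → ℝ),
      (xt, qt) ∈ P ∧
      (∀ a, xt a = 0 ∨ xt a = 1) ∧
      (∀ b, qt b = 0 ∨ qt b = 1) ∧
      (∀ a, (xq.1 a = 0 ∨ xq.1 a = 1) → xt a = xq.1 a) ∧
      (∀ b, (xq.2 b = 0 ∨ xq.2 b = 1) → qt b = xq.2 b) ∧
      {a | xt a ≠ xq.1 a}.ncard + {b | qt b ≠ xq.2 b}.ncard ≤ 2 := by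
  let e := LinearEquiv.sumArrowLequivProdArrow A B ℝ ℝ
  have hPe : e ⁻¹' P = coveringKnapsackPolytope (Sum.elim s 0) (Sum.elim u v) k M := by
    subst hP
    ext y
    simp [e, coveringKnapsackPolytope, Fintype.sum_sum_type, Sum.forall, and_assoc]
  let y := e.symm xq
  have hy : y ∈ extremePoints ℝ (coveringKnapsackPolytope (Sum.elim s 0) (Sum.elim u v) k M) := by
    rw [← hPe, ← e.image_symm_eq_preimage, ← image_extremePoints]
    exact mem_image_of_mem _ hxq
  have hF := ncard_fractionalCoords_le_two hy
  obtain ⟨z, hzP, hz01, hzy⟩ := exists_integral_mem_coveringKnapsackPolytope hy.1 hF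
  refine ⟨fun a => z (.inl a), fun b => z (.inr b), (hPe ▸ hzP : z ∈ e ⁻¹' P), fun a => hz01 _,
    fun b => hz01 _, fun a ha => hzy _ (notMem_fractionalCoords.2 ha),
    fun b hb => hzy _ (notMem_fractionalCoords.2 hb), ?_⟩
  change {a | z (.inl a) ≠ y (.inl a)}.ncard + {b | z (.inr b) ≠ y (.inr b)}.ncard ≤ 2
  rw [ncard_setOf_inl_add_ncard_setOf_inr fun i => z i ≠ y i]
  exact (ncard_le_ncard fun i (hi : z i ≠ y i) => by_contra fun h => hi (hzy i h)).trans hF
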